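/- Under the setup of the one-step inequality applied at u = x* (a minimizer of F), with z_{k+1} = (1−a)v_k + a x_{k+1} and x_{k+1} = (1−a)x_k + a v_k, one has G_{k+1} + (μ̂/(2a)) V_{k+1} ≤ (μ̂(1−a)/(2a)) V_k + ((μ̂−μ_f)/2) X_{k+1} − (μ̂(1−a)³/2) D_k − (μ̂/(2a)) R_{k+1} + (L/2) M_{k+1}, where G_k := F(v_k) − F(x*), V_k := ‖v_k − x*‖², X_k := ‖x_k − x*‖², D_k := ‖x_k − v_k‖², R_{k+1} := ‖v_{k+1} − z_{k+1}‖², M_{k+1} := ‖v_{k+1} − x_{k+1}‖². -/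

import Mathlib

/-!
Three inequalities are added up: the three-point property of the proximal step at `x*`, the
descent lemma between `x_{k+1}` and `v_{k+1}`, and strong convexity of `f` between `x_{k+1}` and
`x*`. Their gradient terms cancel, and `‖z_{k+1} - x*‖²` is expanded with
`x_{k+1} - v_k = (1 - a) (x_k - v_k)`.
-/

open RealInnerProductSpace Set Filter Topology

lemma le_of_forall_mem_Ioc_add_one_sub_mul_le {A C D : ℝ}
    (h : ∀ t ∈ Ioc (0 : ℝ) 1, A + (1 - t) * D ≤ C) : A + D ≤ C := by
  have hlim : Tendsto (fun t : ℝ ↦ A + (1 - t) * D) (𝓝[>] 0) (𝓝 (A + D)) := by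
    have hcont : Continuous fun t : ℝ ↦ A + (1 - t) * D := by fun_prop
    simpa using (hcont.tendsto 0).mono_left nhdsWithin_le_nhds
  exact le_of_tendsto hlim (eventually_of_mem (Ioc_mem_nhdsGT one_pos) h)

section InnerProductSpace

variable {E : Type*} [NormedAddCommGroup E] [InnerProductSpace ℝ E]

lemma norm_one_sub_smul_add_smul_sq (t : ℝ) (p q : E) :
    ‖(1 - t) • p + t • q‖ ^ 2 =
      (1 - t) * ‖p‖ ^ 2 + t * ‖q‖ ^ 2 - t * (1 - t) * ‖p - q‖ ^ 2 := by
  simp only [← real_inner_self_eq_norm_sq, inner_add_left, inner_add_right, inner_sub_left,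
    inner_sub_right, real_inner_smul_left, real_inner_smul_right, real_inner_comm p q]
  ring

lemma norm_sub_sq_of_momentum {a : ℝ} {x v x' z : E} (hx : x' = (1 - a) • x + a • v)
    (hz : z = (1 - a) • v + a • x') (u : E) :
    ‖z - u‖ ^ 2 = (1 - a) * ‖v - u‖ ^ 2 + a * ‖x' - u‖ ^ 2 - a * (1 - a) ^ 3 * ‖x - v‖ ^ 2 := by
  have hzu : z - u = (1 - a) • (v - u) + a • (x' - u) := by rw [hz]; module
  have hxv : (v - u) - (x' - u) = (1 - a) • (v - x) := by rw [hx]; module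
  rw [hzu, norm_one_sub_smul_add_smul_sq, hxv, norm_smul, mul_pow, Real.norm_eq_abs, sq_abs,
    norm_sub_rev v x]
  ring

lemma ConvexOn.prox_three_point {r : E → ℝ} (hr : ConvexOn ℝ univ r) {c : ℝ} {v w : E}
    (hv : ∀ u, r v + c * ‖v - w‖ ^ 2 ≤ r u + c * ‖u - w‖ ^ 2) (u : E) :
    r v + c * ‖v - w‖ ^ 2 + c * ‖u - v‖ ^ 2 ≤ r u + c * ‖u - w‖ ^ 2 := by
  refine le_of_forall_mem_Ioc_add_one_sub_mul_le fun t ⟨ht0, ht1⟩ ↦ ?_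
  have hmin := hv ((1 - t) • v + t • u)
  have hconv : r ((1 - t) • v + t • u) ≤ (1 - t) * r v + t * r u :=
    hr.2 (mem_univ v) (mem_univ u) (by linarith) ht0.le (by ring)
  have hsplit : ‖(1 - t) • v + t • u - w‖ ^ 2 =
      (1 - t) * ‖v - w‖ ^ 2 + t * ‖u - w‖ ^ 2 - t * (1 - t) * ‖u - v‖ ^ 2 := by
    rw [show (1 - t) • v + t • u - w = (1 - t) • (v - w) + t • (u - w) by module,
      norm_one_sub_smul_add_smul_sq, sub_sub_sub_cancel_right, norm_sub_rev v u]
  have hscaled : t * (r v + c * ‖v - w‖ ^ 2 + (1 - t) * (c * ‖u - v‖ ^ 2)) ≤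
      t * (r u + c * ‖u - w‖ ^ 2) := by
    linear_combination hmin + hconv + c * hsplit
  exact le_of_mul_le_mul_left hscaled ht0

/-- Three-point property of a proximal-gradient step `v = prox_{s r}(z - s g)`. -/
lemma ConvexOn.prox_grad_three_point {r : E → ℝ} (hr : ConvexOn ℝ univ r) {s : ℝ} (hs : s ≠ 0)
    {g v z : E}
    (hv : ∀ u, r v + (2 * s)⁻¹ * ‖v - (z - s • g)‖ ^ 2 ≤ r u + (2 * s)⁻¹ * ‖u - (z - s • g)‖ ^ 2)
    (u : E) :
    r v + (2 * s)⁻¹ * ‖v - z‖ ^ 2 + ⟪g, v - u⟫ + (2 * s)⁻¹ * ‖u - v‖ ^ 2 ≤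
      r u + (2 * s)⁻¹ * ‖u - z‖ ^ 2 := by
  have hexpand (y : E) :
      ‖y - (z - s • g)‖ ^ 2 = ‖y - z‖ ^ 2 + 2 * s * ⟪g, y - z⟫ + s ^ 2 * ‖g‖ ^ 2 := by
    rw [sub_sub_eq_add_sub, add_sub_right_comm, norm_add_sq_real, real_inner_smul_right,
      real_inner_comm, norm_smul, mul_pow, Real.norm_eq_abs, sq_abs]
    ring
  have h := hr.prox_three_point hv u
  rw [hexpand, hexpand] at h
  have hs' : (2 * s)⁻¹ * (2 * s) = 1 := inv_mul_cancel₀ (by positivity)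
  simp only [inner_sub_right] at h ⊢
  linear_combination h - (⟪g, v⟫ - ⟪g, u⟫) * hs'

lemma le_add_inner_add_of_lipschitz_gradient [CompleteSpace E] {f : E → ℝ} {f' : E → E}
    (hf : ∀ x, HasGradientAt f (f' x) x) {L : ℝ} (hL : ∀ x y, ‖f' x - f' y‖ ≤ L * ‖x - y‖)
    (x y : E) : f y ≤ f x + ⟪f' x, y - x⟫ + L / 2 * ‖y - x‖ ^ 2 := by
  set φ : ℝ → ℝ := fun t ↦ f (x + t • (y - x)) - t * ⟪f' x, y - x⟫ - L / 2 * t ^ 2 * ‖y - x‖ ^ 2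
  set φ' : ℝ → ℝ := fun t ↦ ⟪f' (x + t • (y - x)), y - x⟫ - ⟪f' x, y - x⟫ - L * t * ‖y - x‖ ^ 2
  have hφ (t : ℝ) : HasDerivAt φ (φ' t) t := by
    have hline : HasDerivAt (fun s : ℝ ↦ x + s • (y - x)) (y - x) t := by
      simpa using ((hasDerivAt_id t).smul_const (y - x)).const_add x
    have hf_line := (hf (x + t • (y - x))).hasFDerivAt.comp_hasDerivAt t hline
    refine ((hf_line.sub ((hasDerivAt_id t).mul_const ⟪f' x, y - x⟫)).sub
      (((hasDerivAt_pow 2 t).const_mul (L / 2)).mul_const (‖y - x‖ ^ 2))).congr_deriv ?_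
    simp only [φ', InnerProductSpace.toDual_apply_apply]
    ring
  have hφ'_nonpos (t : ℝ) (ht : 0 < t) : φ' t ≤ 0 := by
    have hgrad : ‖f' (x + t • (y - x)) - f' x‖ ≤ L * (t * ‖y - x‖) := by
      simpa [norm_smul, abs_of_pos ht] using hL (x + t • (y - x)) x
    have := real_inner_le_norm (f' (x + t • (y - x)) - f' x) (y - x)
    rw [inner_sub_left] at this
    nlinarith [norm_nonneg (y - x)]
  have hanti : AntitoneOn φ (Ici 0) := by
    refine antitoneOn_of_hasDerivWithinAt_nonpos (convex_Ici 0)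
      (fun t _ ↦ (hφ t).continuousAt.continuousWithinAt)
      (fun t _ ↦ (hφ t).hasDerivWithinAt) ?_
    rw [interior_Ici]
    exact hφ'_nonpos
  have h10 : φ 1 ≤ φ 0 := hanti (mem_Ici.2 le_rfl) (mem_Ici.2 zero_le_one) zero_le_one
  simp only [φ, zero_smul, add_zero, one_smul, add_sub_cancel] at h10
  linarith

end InnerProductSpace

theorem stmt_7_general {d : ℕ} (f : EuclideanSpace ℝ (Fin d) → ℝ)
    (f' : EuclideanSpace ℝ (Fin d) → EuclideanSpace ℝ (Fin d))
    (hdiff : ∀ x, HasGradientAt f (f' x) x)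
    (L μf : ℝ)
    (hLsmooth : ∀ x y, ‖f' x - f' y‖ ≤ L * ‖x - y‖)
    (hstrong : ∀ x y, f x + ⟪f' x, y - x⟫ + μf / 2 * ‖y - x‖ ^ 2 ≤ f y)
    (r : EuclideanSpace ℝ (Fin d) → ℝ) (hr : ConvexOn ℝ Set.univ r)
    (F : EuclideanSpace ℝ (Fin d) → ℝ) (hF : ∀ x, F x = f x + r x)
    (xstar : EuclideanSpace ℝ (Fin d))
    (a μ : ℝ) (ha : a ∈ Set.Ioo (0:ℝ) 1) (hμ : 0 < μ)
    (xk vk xk1 zk1 vk1 : EuclideanSpace ℝ (Fin d))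
    (hx : xk1 = (1 - a) • xk + a • vk)
    (hz : zk1 = (1 - a) • vk + a • xk1)
    (hprox : ∀ u, r vk1 + μ / (2 * a) * ‖vk1 - (zk1 - (a / μ) • f' xk1)‖ ^ 2 ≤
        r u + μ / (2 * a) * ‖u - (zk1 - (a / μ) • f' xk1)‖ ^ 2) :
    (F vk1 - F xstar) + μ / (2 * a) * ‖vk1 - xstar‖ ^ 2 ≤
      μ * (1 - a) / (2 * a) * ‖vk - xstar‖ ^ 2
      + (μ - μf) / 2 * ‖xk1 - xstar‖ ^ 2
      - μ * (1 - a) ^ 3 / 2 * ‖xk - vk‖ ^ 2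
      - μ / (2 * a) * ‖vk1 - zk1‖ ^ 2
      + L / 2 * ‖vk1 - xk1‖ ^ 2 := by
  have ha0 : a ≠ 0 := ha.1.ne'
  have hstep : μ / (2 * a) = (2 * (a / μ))⁻¹ := by field_simp
  rw [hstep] at hprox
  have hthree := hr.prox_grad_three_point (div_ne_zero ha0 hμ.ne') hprox xstar
  rw [← hstep, norm_sub_rev xstar vk1, ← norm_sub_rev zk1 xstar] at hthree
  have hdescent := le_add_inner_add_of_lipschitz_gradient hdiff hLsmooth xk1 vk1
  have hstrong' := hstrong xk1 xstar
  rw [norm_sub_rev xstar xk1] at hstrong'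
  have hinner : ⟪f' xk1, vk1 - xk1⟫ - ⟪f' xk1, xstar - xk1⟫ = ⟪f' xk1, vk1 - xstar⟫ := by
    rw [← inner_sub_right, sub_sub_sub_cancel_right]
  have hmomentum : μ / (2 * a) * ‖zk1 - xstar‖ ^ 2 = μ * (1 - a) / (2 * a) * ‖vk - xstar‖ ^ 2
      + μ / 2 * ‖xk1 - xstar‖ ^ 2 - μ * (1 - a) ^ 3 / 2 * ‖xk - vk‖ ^ 2 := by
    rw [norm_sub_sq_of_momentum hx hz]
    field_simp
  rw [hF, hF]
  linarith

/-- expansion of the one-step inequality at the solution `x*`. -/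
theorem stmt_7 {d : ℕ} (f : EuclideanSpace ℝ (Fin d) → ℝ)
    (f' : EuclideanSpace ℝ (Fin d) → EuclideanSpace ℝ (Fin d))
    (hdiff : ∀ x, HasGradientAt f (f' x) x)
    (L μf : ℝ) (hL : 0 ≤ L) (hμf : 0 ≤ μf)
    (hLsmooth : ∀ x y, ‖f' x - f' y‖ ≤ L * ‖x - y‖)
    (hstrong : ∀ x y, f x + ⟪f' x, y - x⟫ + μf / 2 * ‖y - x‖ ^ 2 ≤ f y)
    (r : EuclideanSpace ℝ (Fin d) → ℝ) (hr : ConvexOn ℝ Set.univ r)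
    (F : EuclideanSpace ℝ (Fin d) → ℝ) (hF : ∀ x, F x = f x + r x)
    (xstar : EuclideanSpace ℝ (Fin d)) (hmin : ∀ u, F xstar ≤ F u)
    (a μ : ℝ) (ha : a ∈ Set.Ioo (0:ℝ) 1) (hμ : 0 < μ)
    (xk vk xk1 zk1 vk1 : EuclideanSpace ℝ (Fin d))
    (hx : xk1 = (1 - a) • xk + a • vk)
    (hz : zk1 = (1 - a) • vk + a • xk1)
    (hprox : ∀ u, r vk1 + μ / (2 * a) * ‖vk1 - (zk1 - (a / μ) • f' xk1)‖ ^ 2 ≤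
        r u + μ / (2 * a) * ‖u - (zk1 - (a / μ) • f' xk1)‖ ^ 2) :
    (F vk1 - F xstar) + μ / (2 * a) * ‖vk1 - xstar‖ ^ 2 ≤
      μ * (1 - a) / (2 * a) * ‖vk - xstar‖ ^ 2
      + (μ - μf) / 2 * ‖xk1 - xstar‖ ^ 2
      - μ * (1 - a) ^ 3 / 2 * ‖xk - vk‖ ^ 2
      - μ / (2 * a) * ‖vk1 - zk1‖ ^ 2
      + L / 2 * ‖vk1 - xk1‖ ^ 2 :=
  stmt_7_general f f' hdiff L μf hLsmooth hstrong r hr F hF xstar a μ ha hμ xk vk xk1 zk1 vk1 hx hz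
    hprox
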